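/- Let J be an ideal of a commutative ring R and φ ∈ Hom_R(J, R). Then for all n ≥ 1 and all a₁,…,aₙ ∈ J, one has φ(a₁)·φ(a₂)···φ(aₙ) = φⁿ(a₁a₂···aₙ), where φⁿ denotes φ composed with itself n times (well-defined on Jⁿ since φ(Jᵏ) ⊆ Jᵏ⁻¹). In particular φⁿ(xⁿ) = (φ(x))ⁿ for x ∈ J. -/
import Mathlib


open scoped Classical

/-- The `n`-fold iterate of `φ : J → R` applied to an element of `R`; it is
defined (nonjunk) on elements that stay inside `J` at every step, which is the
case on `Jⁿ` since `φ(Jᵏ) ⊆ Jᵏ⁻¹`. -/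
noncomputable def iterApply {R : Type*} [CommRing R] {J : Ideal R}
    (φ : J →ₗ[R] R) : ℕ → R → R
  | 0, x => x
  | n + 1, x => if h : x ∈ J then iterApply φ n (φ ⟨x, h⟩) else 0

lemma iterApply_aux {R : Type*} [CommRing R] {J : Ideal R}
    (φ : J →ₗ[R] R) :
    ∀ (n : ℕ) (r : R) (a : Fin n → J),
      iterApply φ n (r * ∏ i, (a i : R)) = r * ∏ i, φ (a i) := by
  intro n
  induction n with
  | zero => intro r a; simp [iterApply]
  | succ n ih =>
    intro r a
    have h : r * ∏ i, (a i : R) ∈ J := by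
      refine Ideal.mul_mem_left _ _ ?_
      rw [Fin.prod_univ_succ]
      exact Ideal.mul_mem_right _ _ (a 0).2
    rw [iterApply, dif_pos h]
    have he : (⟨r * ∏ i, (a i : R), h⟩ : J)
        = (r * ∏ i : Fin n, (a i.succ : R)) • a 0 := by
      ext
      simp [Fin.prod_univ_succ]
      ring
    rw [he, map_smul, smul_eq_mul]
    have h2 : (r * ∏ i : Fin n, (a i.succ : R)) * φ (a 0)
        = (r * φ (a 0)) * ∏ i : Fin n, (a i.succ : R) := by ring
    rw [h2, ih]
    rw [Fin.prod_univ_succ (f := fun i => φ (a i))]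
    ring

/-- For an ideal `J` of a commutative ring `R` and `φ ∈ Hom_R(J,R)`, for every
`n ≥ 1` and `a₁, …, aₙ ∈ J` one has `φ(a₁)⋯φ(aₙ) = φⁿ(a₁⋯aₙ)`; in particular
`φⁿ(xⁿ) = (φ(x))ⁿ` for `x ∈ J`. -/
theorem iter_dual_powers {R : Type*} [CommRing R] {J : Ideal R}
    (φ : J →ₗ[R] R) :
    (∀ (n : ℕ), 1 ≤ n → ∀ a : Fin n → J,
        iterApply φ n (∏ i, (a i : R)) = ∏ i, φ (a i)) ∧
      ∀ (n : ℕ), 1 ≤ n → ∀ x : J,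
        iterApply φ n ((x : R) ^ n) = (φ x) ^ n := by
  have key : ∀ (n : ℕ) (a : Fin n → J),
      iterApply φ n (∏ i, (a i : R)) = ∏ i, φ (a i) := by
    intro n a
    have := iterApply_aux φ n 1 a
    simpa using this
  refine ⟨fun n _ a => key n a, fun n _ x => ?_⟩
  have := key n (fun _ => x)
  simpa [Finset.prod_const] using this
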